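/- Let 1<p,q<∞, 0<α<n, and let w be a nonnegative weight on ℝ^n with Muckenhoupt characteristic A_{p,q}(w) = sup over cubes Q of (avg_Q w^q)^{1/q}(avg_Q w^{−p'})^{1/p'} finite, where 1/p − 1/q = α/n. Then the reverse doubling exponent of the measure w^q dx satisfies 1/δ(w^q) ≤ C_{p,q,n} A_{p,q}(w)^q; more precisely, for all cubes Q, |Q|_{w^q} / |3Q|_{w^q} ≤ 1 − 3^{−n(1+q/p')} A_{p,q}(w)^{−q}. -/

import Mathlib

/-!
Hölder's inequality with the conjugate exponents `1 + q/p'` and `1 + p'/q`, applied to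
`1 = w^a w^{-a}` on a subset `E` of a cube `Q` and combined with the `A_{p,q}` bound on `Q`, gives
`w^q(Q) ≤ A^q (|Q|/|E|)^{1 + q/p'} w^q(E)`. Take for `Q` the triple cube `3Q₀` and for `E` the
translate of `Q₀` by its side length along one axis: `E ⊆ 3Q₀` meets `Q₀` in a null set, so
`w^q(Q₀) + w^q(E) ≤ w^q(3Q₀) ≤ 3^{n(1 + q/p')} A^q w^q(E)`, which rearranges to the claim.
-/

open MeasureTheory ENNReal Set

noncomputable section

/-- The axis-parallel cube in `ℝ^n` with center `c` and side length `s`. -/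
def cube (n : ℕ) (c : Fin n → ℝ) (s : ℝ) : Set (Fin n → ℝ) :=
  {x | ∀ i, |x i - c i| ≤ s / 2}

section Cube

variable {n : ℕ}

lemma cube_eq_Icc (c : Fin n → ℝ) (s : ℝ) :
    cube n c s = Icc (c - fun _ => s / 2) (c + fun _ => s / 2) := by
  ext x
  simp only [cube, mem_ofPred_eq, mem_Icc, Pi.le_def, Pi.sub_apply, Pi.add_apply, abs_le]
  constructor
  · intro h
    exact ⟨fun i => by linarith [h i], fun i => by linarith [h i]⟩
  · rintro ⟨hlo, hhi⟩ i
    constructor <;> linarith [hlo i, hhi i]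

lemma volume_cube (c : Fin n → ℝ) {s : ℝ} (hs : 0 ≤ s) :
    volume (cube n c s) = ENNReal.ofReal (s ^ n) := by
  simp only [cube_eq_Icc, Real.volume_Icc_pi, Pi.add_apply, Pi.sub_apply, add_sub_sub_cancel,
    add_halves, Finset.prod_const, Finset.card_univ, Fintype.card_fin, ofReal_pow hs]

lemma measurableSet_cube (c : Fin n → ℝ) (s : ℝ) : MeasurableSet (cube n c s) := by
  rw [cube_eq_Icc]; exact measurableSet_Icc

lemma volume_cube_ne_zero (c : Fin n → ℝ) {s : ℝ} (hs : 0 < s) : volume (cube n c s) ≠ 0 := by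
  simp [volume_cube c hs.le, pow_pos hs]

lemma volume_cube_ne_top (c : Fin n → ℝ) {s : ℝ} (hs : 0 ≤ s) : volume (cube n c s) ≠ ∞ := by
  simp [volume_cube c hs]

lemma volume_cube_mul (c c' : Fin n → ℝ) {k s : ℝ} (hk : 0 ≤ k) (hs : 0 ≤ s) :
    volume (cube n c (k * s)) = ENNReal.ofReal (k ^ n) * volume (cube n c' s) := by
  rw [volume_cube c (mul_nonneg hk hs), volume_cube c' hs, mul_pow,
    ENNReal.ofReal_mul (pow_nonneg hk n)]

lemma cube_subset_cube_three_mul (c : Fin n → ℝ) {s : ℝ} (hs : 0 ≤ s) :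
    cube n c s ⊆ cube n c (3 * s) := by
  intro x hx i
  linarith [hx i]

lemma cube_update_subset_cube_three_mul (c : Fin n → ℝ) {s : ℝ} (i : Fin n) :
    cube n (Function.update c i (c i + s)) s ⊆ cube n c (3 * s) := by
  intro x hx j
  have hxj := abs_le.1 (hx j)
  rcases eq_or_ne j i with rfl | hj
  · rw [Function.update_self] at hxj
    exact abs_le.2 ⟨by linarith [hxj.1], by linarith [hxj.2]⟩
  · rw [Function.update_of_ne hj] at hxj
    exact abs_le.2 ⟨by linarith [hxj.1], by linarith [hxj.2]⟩

lemma volume_cube_inter_cube_update (c : Fin n → ℝ) (s : ℝ) (i : Fin n) :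
    volume (cube n c s ∩ cube n (Function.update c i (c i + s)) s) = 0 := by
  have hplane : volume {x : Fin n → ℝ | x i = c i + s / 2} = 0 := by
    rw [volume_pi]; exact Measure.pi_hyperplane _ i _
  refine measure_mono_null (fun x hx => ?_) hplane
  have h₁ := abs_le.1 (hx.1 i)
  have h₂ := abs_le.1 (hx.2 i)
  rw [Function.update_self] at h₂
  show x i = c i + s / 2
  linarith [h₁.2, h₂.1]

end Cube

section Weight

variable {α : Type*} [MeasurableSpace α] {μ : Measure α} {w : α → ℝ≥0∞} {q r : ℝ}

lemma setLIntegral_add_le_of_inter_null (f : α → ℝ≥0∞) {s t u : Set α} (ht : MeasurableSet t)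
    (hst : μ (s ∩ t) = 0) (hsu : s ⊆ u) (htu : t ⊆ u) :
    ∫⁻ x in s, f x ∂μ + ∫⁻ x in t, f x ∂μ ≤ ∫⁻ x in u, f x ∂μ :=
  calc ∫⁻ x in s, f x ∂μ + ∫⁻ x in t, f x ∂μ
      = ∫⁻ x, f x ∂(μ.restrict (s ∪ t) + μ.restrict (s ∩ t)) := by
        rw [Measure.restrict_union_add_inter s ht, lintegral_add_measure]
    _ = ∫⁻ x in s ∪ t, f x ∂μ := by rw [Measure.restrict_eq_zero.2 hst, add_zero]
    _ ≤ ∫⁻ x in u, f x ∂μ := lintegral_mono_set (union_subset hsu htu)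

lemma measure_univ_rpow_le_lintegral_rpow_mul (hw : Measurable w) (hw0 : ∀ x, w x ≠ 0)
    (hwtop : ∀ x, w x ≠ ∞) (hq : 0 < q) (hr : 0 < r) :
    μ univ ^ (1 + q / r) ≤ (∫⁻ x, w x ^ q ∂μ) * (∫⁻ x, w x ^ (-r) ∂μ) ^ (q / r) := by
  set u := 1 + q / r
  set a := q * r / (q + r)
  have hu : 0 < u := by positivity
  have hconj : u.HolderConjugate (1 + r / q) :=
    Real.holderConjugate_iff.2 ⟨by simp only [u]; linarith [div_pos hq hr], by
      simp only [u]; field_simp; ring⟩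
  have hau : a * u = q := by simp only [a, u]; field_simp; ring
  have hau' : -a * (1 + r / q) = -r := by simp only [a]; field_simp
  have holder : μ univ ≤ (∫⁻ x, w x ^ q ∂μ) ^ (1 / u) * (∫⁻ x, w x ^ (-r) ∂μ) ^ (1 / (1 + r / q)) :=
    calc μ univ = ∫⁻ x, ((fun x => w x ^ a) * fun x => w x ^ (-a)) x ∂μ := by
          rw [← setLIntegral_univ, ← setLIntegral_one]
          refine lintegral_congr fun x => ?_
          rw [Pi.mul_apply, ← ENNReal.rpow_add _ _ (hw0 x) (hwtop x), add_neg_cancel,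
            ENNReal.rpow_zero]
      _ ≤ _ := ENNReal.lintegral_mul_le_Lp_mul_Lq μ hconj (hw.pow_const a).aemeasurable
          (hw.pow_const (-a)).aemeasurable
      _ = _ := by simp only [← ENNReal.rpow_mul, hau, hau']
  calc μ univ ^ u
      ≤ ((∫⁻ x, w x ^ q ∂μ) ^ (1 / u) * (∫⁻ x, w x ^ (-r) ∂μ) ^ (1 / (1 + r / q))) ^ u :=
        ENNReal.rpow_le_rpow holder hu.le
    _ = _ := by
        have hexp : 1 / (1 + r / q) * u = q / r := by simp only [u]; field_simp; ring
        rw [ENNReal.mul_rpow_of_nonneg _ _ hu.le, ← ENNReal.rpow_mul, ← ENNReal.rpow_mul,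
          one_div_mul_cancel hu.ne', ENNReal.rpow_one, hexp]

lemma setLIntegral_rpow_mul_le_of_apq_le (hq : 0 < q) (hr : 0 < r) {Q : Set α} (hQ0 : μ Q ≠ 0)
    (hQtop : μ Q ≠ ∞) {B : ℝ≥0∞}
    (hchar : ((μ Q)⁻¹ * ∫⁻ x in Q, w x ^ q ∂μ) ^ (1 / q) *
      ((μ Q)⁻¹ * ∫⁻ x in Q, w x ^ (-r) ∂μ) ^ (1 / r) ≤ B) :
    (∫⁻ x in Q, w x ^ q ∂μ) * (∫⁻ x in Q, w x ^ (-r) ∂μ) ^ (q / r) ≤ B ^ q * μ Q ^ (1 + q / r) := by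
  set Iq := ∫⁻ x in Q, w x ^ q ∂μ
  set Ir := ∫⁻ x in Q, w x ^ (-r) ∂μ
  have hchar_pow : (μ Q)⁻¹ * Iq * ((μ Q)⁻¹ * Ir) ^ (q / r) ≤ B ^ q := by
    have h := ENNReal.rpow_le_rpow hchar hq.le
    rwa [ENNReal.mul_rpow_of_nonneg _ _ hq.le, ← ENNReal.rpow_mul, ← ENNReal.rpow_mul,
      one_div_mul_cancel hq.ne', ENNReal.rpow_one, one_div_mul_eq_div] at h
  have hcancel : ∀ I, μ Q * ((μ Q)⁻¹ * I) = I := fun I => by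
    rw [← mul_assoc, ENNReal.mul_inv_cancel hQ0 hQtop, one_mul]
  calc Iq * Ir ^ (q / r) = μ Q * ((μ Q)⁻¹ * Iq) * (μ Q * ((μ Q)⁻¹ * Ir)) ^ (q / r) := by
        rw [hcancel, hcancel]
    _ = μ Q ^ (1 + q / r) * ((μ Q)⁻¹ * Iq * ((μ Q)⁻¹ * Ir) ^ (q / r)) := by
        rw [ENNReal.mul_rpow_of_nonneg _ _ (by positivity), ENNReal.rpow_add _ _ hQ0 hQtop,
          ENNReal.rpow_one]
        ring
    _ ≤ μ Q ^ (1 + q / r) * B ^ q := by gcongr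
    _ = B ^ q * μ Q ^ (1 + q / r) := mul_comm _ _

lemma setLIntegral_rpow_ne_top_of_apq_le (hw : Measurable w) (hwtop : ∀ x, w x ≠ ∞) (hq : 0 < q)
    (hr : 0 < r) {Q : Set α} (hQ0 : μ Q ≠ 0) (hQtop : μ Q ≠ ∞) {B : ℝ≥0∞} (hB : B ≠ ∞)
    (hchar : ((μ Q)⁻¹ * ∫⁻ x in Q, w x ^ q ∂μ) ^ (1 / q) *
      ((μ Q)⁻¹ * ∫⁻ x in Q, w x ^ (-r) ∂μ) ^ (1 / r) ≤ B) :
    ∫⁻ x in Q, w x ^ q ∂μ ≠ ∞ := by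
  have hIr : ∫⁻ x in Q, w x ^ (-r) ∂μ ≠ 0 := by
    have hsupp : Function.support (fun x => w x ^ (-r)) = univ :=
      Function.support_eq_univ fun x => by simp [ENNReal.rpow_eq_zero_iff, hwtop x, hr, hr.le]
    rw [← pos_iff_ne_zero, setLIntegral_pos_iff (hw.pow_const _), hsupp, univ_inter]
    exact pos_iff_ne_zero.2 hQ0
  have hIr_pow : (∫⁻ x in Q, w x ^ (-r) ∂μ) ^ (q / r) ≠ 0 :=
    (ENNReal.rpow_pos_of_nonneg (pos_iff_ne_zero.2 hIr) (by positivity)).ne'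
  intro htop
  have h := setLIntegral_rpow_mul_le_of_apq_le hq hr hQ0 hQtop hchar
  rw [htop, ENNReal.top_mul hIr_pow] at h
  exact (ENNReal.mul_ne_top (ENNReal.rpow_ne_top_of_nonneg hq.le hB)
    (ENNReal.rpow_ne_top_of_nonneg (by positivity) hQtop)) (top_le_iff.1 h)

lemma setLIntegral_rpow_le_of_apq_le (hw : Measurable w) (hw0 : ∀ x, w x ≠ 0)
    (hwtop : ∀ x, w x ≠ ∞) (hq : 0 < q) (hr : 0 < r) {Q E : Set α} (hEQ : E ⊆ Q)
    (hE0 : μ E ≠ 0) (hEtop : μ E ≠ ∞) {D B : ℝ≥0∞} (hQE : μ Q = D * μ E) (hDtop : D ≠ ∞)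
    (hchar : ((μ Q)⁻¹ * ∫⁻ x in Q, w x ^ q ∂μ) ^ (1 / q) *
      ((μ Q)⁻¹ * ∫⁻ x in Q, w x ^ (-r) ∂μ) ^ (1 / r) ≤ B) :
    ∫⁻ x in Q, w x ^ q ∂μ ≤ B ^ q * D ^ (1 + q / r) * ∫⁻ x in E, w x ^ q ∂μ := by
  have hu : 0 ≤ 1 + q / r := by positivity
  have hQ0 : μ Q ≠ 0 := ne_bot_of_le_ne_bot hE0 (measure_mono hEQ)
  have hQtop : μ Q ≠ ∞ := hQE ▸ ENNReal.mul_ne_top hDtop hEtop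
  have hholder := measure_univ_rpow_le_lintegral_rpow_mul (μ := μ.restrict E) hw hw0 hwtop hq hr
  rw [Measure.restrict_apply_univ] at hholder
  rw [← ENNReal.mul_le_mul_iff_left (ENNReal.rpow_pos (pos_iff_ne_zero.2 hE0) hEtop).ne'
    (ENNReal.rpow_ne_top_of_nonneg hu hEtop)]
  calc (∫⁻ x in Q, w x ^ q ∂μ) * μ E ^ (1 + q / r)
      ≤ (∫⁻ x in Q, w x ^ q ∂μ) *
          ((∫⁻ x in E, w x ^ q ∂μ) * (∫⁻ x in Q, w x ^ (-r) ∂μ) ^ (q / r)) := by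
        gcongr
        exact hholder.trans (by gcongr)
    _ = (∫⁻ x in Q, w x ^ q ∂μ) * (∫⁻ x in Q, w x ^ (-r) ∂μ) ^ (q / r) *
          ∫⁻ x in E, w x ^ q ∂μ := by ring
    _ ≤ B ^ q * μ Q ^ (1 + q / r) * ∫⁻ x in E, w x ^ q ∂μ := by
        gcongr ?_ * _
        exact setLIntegral_rpow_mul_le_of_apq_le hq hr hQ0 hQtop hchar
    _ = (B ^ q * D ^ (1 + q / r) * ∫⁻ x in E, w x ^ q ∂μ) * μ E ^ (1 + q / r) := by
        rw [hQE, ENNReal.mul_rpow_of_nonneg _ _ hu]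
        ring

end Weight

lemma le_ofReal_one_sub_inv_mul_of_add_le {a b c : ℝ≥0∞} {k : ℝ} (hk : 0 < k) (hc : c ≠ ∞)
    (habc : a + b ≤ c) (hcb : c ≤ ENNReal.ofReal k * b) :
    a ≤ ENNReal.ofReal (1 - k⁻¹) * c := by
  have hKc : (ENNReal.ofReal k)⁻¹ * c ≤ b :=
    (ENNReal.inv_mul_le_iff (ENNReal.ofReal_pos.2 hk).ne' ENNReal.ofReal_ne_top).2 hcb
  rw [ENNReal.ofReal_sub _ (inv_nonneg.2 hk.le), ENNReal.ofReal_one, ENNReal.ofReal_inv_of_pos hk,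
    ENNReal.sub_mul fun _ _ => hc, one_mul]
  exact ENNReal.le_sub_of_add_le_right
    (ENNReal.mul_ne_top (ENNReal.inv_ne_top.2 (ENNReal.ofReal_pos.2 hk).ne') hc)
    ((add_le_add_right hKc a).trans habc)

theorem reverse_doubling_from_Apq_general (n : ℕ) (hn : 0 < n) (p q A : ℝ)
    (hp : 1 < p) (hq : 1 < q) (hA : 0 < A)
    (w : (Fin n → ℝ) → ℝ≥0∞) (hwm : Measurable w) (hw : ∀ x, 0 < w x ∧ w x < ∞)
    (hchar : ∀ (c : Fin n → ℝ) (s : ℝ), 0 < s →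
      ((ENNReal.ofReal (s ^ n))⁻¹ * ∫⁻ x in cube n c s, w x ^ q) ^ (1 / q) *
          ((ENNReal.ofReal (s ^ n))⁻¹ * ∫⁻ x in cube n c s, w x ^ (-(p / (p - 1)))) ^ (1 - 1 / p)
        ≤ ENNReal.ofReal A) :
    ∀ (c : Fin n → ℝ) (s : ℝ), 0 < s →
      (∫⁻ x in cube n c s, w x ^ q)
        ≤ ENNReal.ofReal (1 - 3 ^ (-((n : ℝ) * (1 + q / (p / (p - 1))))) * A ^ (-q)) *
            ∫⁻ x in cube n c (3 * s), w x ^ q := by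
  intro c s hs
  have hexp : 1 - 1 / p = 1 / (p / (p - 1)) := by field_simp
  set p' := p / (p - 1)
  have hp' : 0 < p' := div_pos (by linarith) (by linarith)
  have hq0 : 0 < q := by linarith
  have hw0 : ∀ x, w x ≠ 0 := fun x => (hw x).1.ne'
  have hwtop : ∀ x, w x ≠ ∞ := fun x => (hw x).2.ne
  have h3s : 0 < 3 * s := by positivity
  have i : Fin n := ⟨0, hn⟩
  have hchar3 := hchar c (3 * s) h3s
  rw [← volume_cube c h3s.le, hexp] at hchar3
  have hcomparison := setLIntegral_rpow_le_of_apq_le hwm hw0 hwtop hq0 hp'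
    (cube_update_subset_cube_three_mul c i) (volume_cube_ne_zero _ hs) (volume_cube_ne_top _ hs.le)
    (volume_cube_mul c _ (by norm_num) hs.le) ofReal_ne_top hchar3
  have hfinite := setLIntegral_rpow_ne_top_of_apq_le hwm hwtop hq0 hp'
    (volume_cube_ne_zero c h3s) (volume_cube_ne_top c h3s.le) ofReal_ne_top hchar3
  have hsplit := setLIntegral_add_le_of_inter_null (fun x => w x ^ q) (measurableSet_cube _ _)
    (volume_cube_inter_cube_update c s i) (cube_subset_cube_three_mul c hs.le)
    (cube_update_subset_cube_three_mul c i)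
  have hconst : ENNReal.ofReal A ^ q * ENNReal.ofReal ((3 : ℝ) ^ n) ^ (1 + q / p') =
      ENNReal.ofReal (A ^ q * 3 ^ ((n : ℝ) * (1 + q / p'))) := by
    rw [ENNReal.ofReal_rpow_of_pos hA, ENNReal.ofReal_rpow_of_pos (by positivity),
      ← ENNReal.ofReal_mul (by positivity), ← Real.rpow_natCast, ← Real.rpow_mul (by norm_num)]
  rw [hconst] at hcomparison
  rw [Real.rpow_neg (by norm_num), Real.rpow_neg hA.le, ← mul_inv, mul_comm ((3 : ℝ) ^ _)]
  exact le_ofReal_one_sub_inv_mul_of_add_le (by positivity) hfinite hsplit hcomparison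

/-- **Quantitative reverse doubling of `w^q` from the `A_{p,q}` condition.**  Let
`1 < p, q < ∞`, `0 < α < n` with `1/p − 1/q = α/n`, and let `w` be a positive finite
measurable weight on `ℝ^n` whose Muckenhoupt characteristic is at most `A`, i.e. for every
cube `Q`, `(avg_Q w^q)^{1/q} (avg_Q w^{−p'})^{1/p'} ≤ A`.  Then for every cube `Q`,
`|Q|_{w^q} ≤ (1 − 3^{−n(1+q/p')} A^{−q}) |3Q|_{w^q}`. -/
theorem reverse_doubling_from_Apq (n : ℕ) (hn : 0 < n) (p q α A : ℝ)
    (hp : 1 < p) (hq : 1 < q) (hα : 0 < α) (hαn : α < n)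
    (hbal : 1 / p - 1 / q = α / (n : ℝ)) (hA : 0 < A)
    (w : (Fin n → ℝ) → ℝ≥0∞) (hwm : Measurable w) (hw : ∀ x, 0 < w x ∧ w x < ∞)
    (hchar : ∀ (c : Fin n → ℝ) (s : ℝ), 0 < s →
      ((ENNReal.ofReal (s ^ n))⁻¹ * ∫⁻ x in cube n c s, w x ^ q) ^ (1 / q) *
          ((ENNReal.ofReal (s ^ n))⁻¹ * ∫⁻ x in cube n c s, w x ^ (-(p / (p - 1)))) ^ (1 - 1 / p)
        ≤ ENNReal.ofReal A) :
    ∀ (c : Fin n → ℝ) (s : ℝ), 0 < s →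
      (∫⁻ x in cube n c s, w x ^ q)
        ≤ ENNReal.ofReal (1 - 3 ^ (-((n : ℝ) * (1 + q / (p / (p - 1))))) * A ^ (-q)) *
            ∫⁻ x in cube n c (3 * s), w x ^ q :=
  reverse_doubling_from_Apq_general n hn p q A hp hq hA w hwm hw hchar

end
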